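/- Let P = (P_{ij}) be an N×N matrix of orthogonal projections in M_K(ℂ) which is 'magic': ∑_j P_{ij} = Id = ∑_i P_{ij} for all rows and columns, and suppose each P_{ij} has rank at most 1, with all P_{ij} pairwise commuting. Then there exist rank-one projections P_1,...,P_K summing to the identity and a sparse Latin square L with N rows/columns and K symbols such that P_{ij} = P_{L_{ij}} (with the convention that the symbol * gives the zero projection). -/

import Mathlib

open Matrix

/-- A sparse Latin square of size `N` with symbols `Fin K`: every symbol appears
exactly once in each row and exactly once in each column. -/
def IsSparseLatin {N K : ℕ} (L : Fin N → Fin N → Option (Fin K)) : Prop :=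
  (∀ i : Fin N, ∀ x : Fin K, ∃! j : Fin N, L i j = some x) ∧
  (∀ j : Fin N, ∀ x : Fin K, ∃! i : Fin N, L i j = some x)

/-! For an idempotent matrix over a field, trace equals rank, so ranks are additive whenever an
idempotent is a sum of commuting idempotents. Hence the nonzero entries of any row of `P` are
exactly `K` rank-one projections summing to `1`, and they are pairwise orthogonal. A nonzero
entry anywhere else commutes with them and has rank one, so it is one of them; orthogonality
within rows and columns makes each symbol occur exactly once. If `N = 0`, the diagonal matrix
units do the job. -/

namespace Matrix

theorem rank_eq_zero_iff {m n 𝕜 : Type*} [Fintype n] [Field 𝕜] {A : Matrix m n 𝕜} :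
    A.rank = 0 ↔ A = 0 := by
  classical
  rw [rank, Submodule.finrank_eq_zero, LinearMap.range_eq_bot, ← toLin'_apply',
    LinearEquiv.map_eq_zero_iff]

variable {n 𝕜 : Type*} [Fintype n] [DecidableEq n] [Field 𝕜]

theorem trace_eq_rank_of_isIdempotentElem {A : Matrix n n 𝕜} (hA : IsIdempotentElem A) :
    A.trace = A.rank := by
  rw [← trace_toLin'_eq]
  exact (LinearMap.IsIdempotentElem.isProj_range _ (hA.map toLinAlgEquiv')).trace

variable [CharZero 𝕜]

theorem sum_rank_eq_rank_of_sum_eq {ι : Type*} {s : Finset ι} {R : ι → Matrix n n 𝕜}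
    {A : Matrix n n 𝕜} (hR : ∀ i ∈ s, IsIdempotentElem (R i)) (hA : IsIdempotentElem A)
    (h : ∑ i ∈ s, R i = A) : ∑ i ∈ s, (R i).rank = A.rank := by
  have : ((∑ i ∈ s, (R i).rank : ℕ) : 𝕜) = A.rank := by
    rw [Nat.cast_sum, ← trace_eq_rank_of_isIdempotentElem hA, ← h, trace_sum]
    exact Finset.sum_congr rfl fun i hi => (trace_eq_rank_of_isIdempotentElem (hR i hi)).symm
  exact_mod_cast this

theorem rank_single_same_one (i : n) : (single i i (1 : 𝕜)).rank = 1 := by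
  have hidem : IsIdempotentElem (single i i (1 : 𝕜)) := by
    rw [IsIdempotentElem, single_mul_single_same, mul_one]
  have h := trace_eq_rank_of_isIdempotentElem hidem
  rw [trace_single_eq_same] at h
  exact_mod_cast h.symm

/-- `A = A B + A (1 - B)` splits `A` into two idempotents whose ranks add up, so the hypothesis
forces `A (1 - B) = 0`. -/
theorem mul_eq_left_of_rank_le_rank_mul {A B : Matrix n n 𝕜} (hA : IsIdempotentElem A)
    (hB : IsIdempotentElem B) (hAB : Commute A B) (h : A.rank ≤ (A * B).rank) : A * B = A := by
  have hsplit : A * B + A * (1 - B) = A := by rw [mul_sub, mul_one, add_sub_cancel]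
  have hrank : (A * B).rank + (A * (1 - B)).rank = A.rank := by
    have := congrArg trace hsplit
    rw [trace_add, trace_eq_rank_of_isIdempotentElem (hA.mul_of_commute hAB hB),
      trace_eq_rank_of_isIdempotentElem
        (hA.mul_of_commute ((Commute.one_right A).sub_right hAB) hB.one_sub),
      trace_eq_rank_of_isIdempotentElem hA] at this
    exact_mod_cast this
  have : A * (1 - B) = 0 := rank_eq_zero_iff.mp (by omega)
  rwa [mul_sub, mul_one, sub_eq_zero, eq_comm] at this

section Family

variable {ι : Type*} [Fintype ι] {R : ι → Matrix n n 𝕜}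

theorem mul_eq_zero_of_sum_eq_one [DecidableEq ι] (hR : ∀ i, IsIdempotentElem (R i))
    (hcomm : ∀ i j, Commute (R i) (R j)) (hsum : ∑ i, R i = 1) {i j : ι} (hij : i ≠ j) :
    R i * R j = 0 := by
  have hranks := sum_rank_eq_rank_of_sum_eq (s := Finset.univ)
    (fun k _ => (hR i).mul_of_commute (hcomm i k) (hR k)) (hR i)
    (by rw [← Finset.mul_sum, hsum, mul_one])
  rw [← Finset.add_sum_erase _ _ (Finset.mem_univ i), (hR i).eq, add_eq_left,
    Finset.sum_eq_zero_iff] at hranks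
  exact rank_eq_zero_iff.mp (hranks j (Finset.mem_erase.mpr ⟨hij.symm, Finset.mem_univ j⟩))

theorem natCard_ne_zero_eq_card_of_sum_eq_one (hR : ∀ i, IsIdempotentElem (R i))
    (hRrank : ∀ i, (R i).rank ≤ 1) (hsum : ∑ i, R i = 1) :
    Nat.card {i // R i ≠ 0} = Fintype.card n := by
  classical
  have hranks := sum_rank_eq_rank_of_sum_eq (s := Finset.univ) (fun i _ => hR i)
    IsIdempotentElem.one hsum
  rw [rank_one] at hranks
  rw [Nat.card_eq_fintype_card, Fintype.card_subtype, ← hranks, Finset.card_filter]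
  refine Finset.sum_congr rfl fun i _ => ?_
  split_ifs with h
  · have := rank_eq_zero_iff.not.mpr h
    have := hRrank i
    omega
  · rw [not_not.mp h, rank_zero]

theorem exists_equiv_ne_zero_of_sum_eq_one (hR : ∀ i, IsIdempotentElem (R i))
    (hRrank : ∀ i, (R i).rank ≤ 1) (hsum : ∑ i, R i = 1) :
    ∃ e : n ≃ {i // R i ≠ 0}, ∑ x, R (e x) = 1 := by
  classical
  refine ⟨Fintype.equivOfCardEq ?_, ?_⟩
  · simpa only [Nat.card_eq_fintype_card] using
      (natCard_ne_zero_eq_card_of_sum_eq_one hR hRrank hsum).symm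
  · rw [Equiv.sum_comp _ fun i : {i // R i ≠ 0} => R i,
      ← Finset.sum_subtype {i | R i ≠ 0} (by simp) R, Finset.sum_filter_ne_zero, hsum]

/-- The rank-one pieces `p R i` of `p = ∑ i, p R i` have ranks summing to one, so one of them
is `p` itself, and then also `R i`. -/
theorem exists_eq_of_commute (hR : ∀ i, IsIdempotentElem (R i)) (hRrank : ∀ i, (R i).rank ≤ 1)
    (hsum : ∑ i, R i = 1) {p : Matrix n n 𝕜} (hp : IsIdempotentElem p) (hprank : p.rank = 1)
    (hpR : ∀ i, Commute p (R i)) : ∃ i, R i = p := by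
  have hranks := sum_rank_eq_rank_of_sum_eq (s := Finset.univ)
    (fun i _ => hp.mul_of_commute (hpR i) (hR i)) hp (by rw [← Finset.mul_sum, hsum, mul_one])
  obtain ⟨i, -, hi⟩ := Finset.exists_ne_zero_of_sum_ne_zero (hranks.trans_ne (by omega))
  have hpi : p * R i = p := mul_eq_left_of_rank_le_rank_mul hp (hR i) (hpR i) (by omega)
  have hip : R i * p = R i := mul_eq_left_of_rank_le_rank_mul (hR i) hp (hpR i).symm
    (by rw [← (hpR i).eq]; have := hRrank i; omega)
  exact ⟨i, by rw [← hip, ← (hpR i).eq, hpi]⟩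

theorem existsUnique_eq_of_commute (hR : ∀ i, IsIdempotentElem (R i))
    (hRrank : ∀ i, (R i).rank ≤ 1) (hcomm : ∀ i j, Commute (R i) (R j)) (hsum : ∑ i, R i = 1)
    {p : Matrix n n 𝕜} (hp : IsIdempotentElem p) (hprank : p.rank = 1)
    (hpR : ∀ i, Commute p (R i)) : ∃! i, R i = p := by
  classical
  obtain ⟨i, hi⟩ := exists_eq_of_commute hR hRrank hsum hp hprank hpR
  refine ⟨i, hi, fun j hj => by_contra fun hji => ?_⟩
  have h0 := mul_eq_zero_of_sum_eq_one hR hcomm hsum hji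
  rw [hj, hi, hp.eq] at h0
  simp [h0] at hprank

end Family

end Matrix

theorem isSparseLatin_of_existsUnique {N K : ℕ} {α : Type*} [Zero α] {P : Fin N → Fin N → α}
    {Q : Fin K → α} {L : Fin N → Fin N → Option (Fin K)} (hQ : Function.Injective Q)
    (hQ0 : ∀ x, Q x ≠ 0) (hL : ∀ i j, P i j = (L i j).elim 0 Q)
    (hrow : ∀ i x, ∃! j, P i j = Q x) (hcol : ∀ j x, ∃! i, P i j = Q x) : IsSparseLatin L := by
  have key : ∀ i j x, L i j = some x ↔ P i j = Q x := by
    intro i j x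
    cases h : L i j <;> simp [hL, h, hQ.eq_iff, (hQ0 x).symm, eq_comm]
  simp_rw [IsSparseLatin, key]
  exact ⟨hrow, hcol⟩

theorem stmt_16 {N K : ℕ} (P : Fin N → Fin N → Matrix (Fin K) (Fin K) ℂ)
    (hproj : ∀ i j, P i j * P i j = P i j ∧ (P i j)ᴴ = P i j)
    (hrank : ∀ i j, (P i j).rank ≤ 1)
    (hrow : ∀ i, ∑ j, P i j = 1) (hcol : ∀ j, ∑ i, P i j = 1)
    (hcomm : ∀ i j k l, P i j * P k l = P k l * P i j) :
    ∃ (Q : Fin K → Matrix (Fin K) (Fin K) ℂ) (L : Fin N → Fin N → Option (Fin K)),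
      (∀ x, Q x * Q x = Q x ∧ (Q x)ᴴ = Q x ∧ (Q x).rank = 1) ∧
      (∑ x, Q x = 1) ∧
      IsSparseLatin L ∧
      (∀ i j, P i j = (L i j).elim 0 (fun x => Q x)) := by
  rcases isEmpty_or_nonempty (Fin N) with _ | ⟨⟨i₀⟩⟩
  · refine ⟨fun x => single x x 1, isEmptyElim, fun x => ⟨?_, by simp, rank_single_same_one x⟩,
      sum_single_one, ⟨isEmptyElim, isEmptyElim⟩, isEmptyElim⟩
    rw [single_mul_single_same, mul_one]
  have hidem : ∀ i j, IsIdempotentElem (P i j) := fun i j => (hproj i j).1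
  have hrank_one : ∀ i j, P i j ≠ 0 → (P i j).rank = 1 := fun i j h =>
    (hrank i j).antisymm (Nat.one_le_iff_ne_zero.mpr (rank_eq_zero_iff.not.mpr h))
  obtain ⟨e, hsum⟩ := exists_equiv_ne_zero_of_sum_eq_one (hidem i₀) (hrank i₀) (hrow i₀)
  set Q := fun x => P i₀ (e x)
  have hQ0 : ∀ x, Q x ≠ 0 := fun x => (e x).2
  have hrow_unique : ∀ i x, ∃! j, P i j = Q x := fun i x =>
    existsUnique_eq_of_commute (hidem i) (hrank i) (hcomm i · i ·) (hrow i) (hidem i₀ _)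
      (hrank_one i₀ _ (hQ0 x)) (hcomm i₀ _ i ·)
  have hcol_unique : ∀ j x, ∃! i, P i j = Q x := fun j x =>
    existsUnique_eq_of_commute (hidem · j) (hrank · j) (hcomm · j · j) (hcol j) (hidem i₀ _)
      (hrank_one i₀ _ (hQ0 x)) (hcomm i₀ _ · j)
  have hQinj : Function.Injective Q := fun x y hxy =>
    e.injective (Subtype.ext ((hrow_unique i₀ y).unique hxy rfl))
  have hlabel : ∀ i j, ∃ o : Option (Fin K), P i j = o.elim 0 Q := by
    intro i j
    by_cases h : P i j = 0
    · exact ⟨none, h⟩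
    obtain ⟨k, hk⟩ := exists_eq_of_commute (hidem i₀) (hrank i₀) (hrow i₀) (hidem i j)
      (hrank_one i j h) (hcomm i j i₀)
    exact ⟨some (e.symm ⟨k, hk ▸ h⟩), by simp [Q, hk]⟩
  choose L hL using hlabel
  exact ⟨Q, L, fun x => ⟨(hidem i₀ _).eq, (hproj i₀ _).2, hrank_one i₀ _ (hQ0 x)⟩, hsum,
    isSparseLatin_of_existsUnique hQinj hQ0 hL hrow_unique hcol_unique, hL⟩
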